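/- arXiv:2601.21942 — 5 statements merged into one kernel-verified Lean document; each statement's English description precedes it below -/
import Mathlib

section
/- Fix integers d, N ≥ 1, a real β > 0, matrices Q, K ∈ ℝ^{d×d}, and a bound M > 0. There exists a constant M_P ≥ 0 such that for every matrix V ∈ ℝ^{d×d} with |V_{kl}| ≤ M for all k, l, the map Φ_V(x, (X^1,…,X^N)) = V·A^S_β(x,(X^1,…,X^N)) − ⟨x, V·A^S_β(x,(X^1,…,X^N))⟩ x is Lipschitz with constant M_P on the set S^{d−1} × (S^{d−1})^N ⊂ ℝ^d × (ℝ^d)^N (with the Euclidean metric on the product). -/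
open RealInnerProductSpace

/-- View a plain vector in `Fin d → ℝ` as an element of Euclidean space. -/
def toEuc (d : ℕ) (v : Fin d → ℝ) : EuclideanSpace ℝ (Fin d) := WithLp.toLp 2 v

/-- Softmax self-attention with inverse temperature `β` and key/query matrices `Q`, `K`. -/
noncomputable def attnS (d N : ℕ) (β : ℝ) (Q K : Matrix (Fin d) (Fin d) ℝ)
    (x : EuclideanSpace ℝ (Fin d)) (X : Fin N → EuclideanSpace ℝ (Fin d)) :
    EuclideanSpace ℝ (Fin d) :=
  (∑ j, Real.exp (β * ∑ i, Q.mulVec x i * K.mulVec (X j) i))⁻¹ •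
    ∑ j, Real.exp (β * ∑ i, Q.mulVec x i * K.mulVec (X j) i) • X j

/-- The projected field `Φ_V(x, X) = P⊥ₓ[V·A^S_β(x, X)]`. -/
noncomputable def projField (d N : ℕ) (β : ℝ) (Q K V : Matrix (Fin d) (Fin d) ℝ)
    (x : EuclideanSpace ℝ (Fin d)) (X : Fin N → EuclideanSpace ℝ (Fin d)) :
    EuclideanSpace ℝ (Fin d) :=
  toEuc d (V.mulVec (attnS d N β Q K x X))
    - ⟪x, toEuc d (V.mulVec (attnS d N β Q K x X))⟫ • x

lemma contDiff_attnS (d N : ℕ) (hN : 1 ≤ N) (β : ℝ) (Q K : Matrix (Fin d) (Fin d) ℝ) :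
    ContDiff ℝ 1 (fun p : EuclideanSpace ℝ (Fin d) × (Fin N → EuclideanSpace ℝ (Fin d)) =>
      attnS d N β Q K p.1 p.2) := by
  have : NeZero N := ⟨by omega⟩
  unfold attnS
  have hcoord : ∀ k : Fin d, ContDiff ℝ 1 (fun v : EuclideanSpace ℝ (Fin d) => v k) :=
    contDiff_euclidean.mp contDiff_id
  have hw : ∀ j : Fin N, ContDiff ℝ 1
      (fun p : EuclideanSpace ℝ (Fin d) × (Fin N → EuclideanSpace ℝ (Fin d)) =>
        Real.exp (β * ∑ i, Q.mulVec p.1 i * K.mulVec (p.2 j) i)) := by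
    intro j
    apply (Real.contDiff_exp.of_le le_top).comp
    apply ContDiff.mul contDiff_const
    apply ContDiff.sum; intro i _
    apply ContDiff.mul
    · simp only [Matrix.mulVec, dotProduct]
      apply ContDiff.sum; intro k _
      exact contDiff_const.mul ((hcoord k).comp contDiff_fst)
    · simp only [Matrix.mulVec, dotProduct]
      apply ContDiff.sum; intro k _
      exact contDiff_const.mul ((hcoord k).comp ((contDiff_apply ℝ _ j).comp contDiff_snd))
  apply ContDiff.fun_smul
  · exact (ContDiff.sum fun j _ => hw j).inv (fun p => by positivity)
  · exact ContDiff.sum fun j _ => (hw j).smul ((contDiff_apply ℝ _ j).comp contDiff_snd)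

lemma contDiff_F (d N : ℕ) (hN : 1 ≤ N) (β : ℝ) (Q K : Matrix (Fin d) (Fin d) ℝ) :
    ContDiff ℝ 1 (fun p : (Fin d → Fin d → ℝ) ×
        (EuclideanSpace ℝ (Fin d) × (Fin N → EuclideanSpace ℝ (Fin d))) =>
      projField d N β Q K (Matrix.of p.1) p.2.1 p.2.2) := by
  have hcoord : ∀ k : Fin d, ContDiff ℝ 1 (fun v : EuclideanSpace ℝ (Fin d) => v k) :=
    contDiff_euclidean.mp contDiff_id
  have ha := (contDiff_attnS d N hN β Q K).comp
    (contDiff_snd : ContDiff ℝ 1 (fun p : (Fin d → Fin d → ℝ) ×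
        (EuclideanSpace ℝ (Fin d) × (Fin N → EuclideanSpace ℝ (Fin d))) => p.2))
  have hVa : ContDiff ℝ 1 (fun p : (Fin d → Fin d → ℝ) ×
        (EuclideanSpace ℝ (Fin d) × (Fin N → EuclideanSpace ℝ (Fin d))) =>
      toEuc d ((Matrix.of p.1).mulVec (attnS d N β Q K p.2.1 p.2.2))) := by
    rw [contDiff_euclidean]
    intro i
    simp only [toEuc, WithLp.ofLp_toLp, Matrix.mulVec, dotProduct, Matrix.of_apply]
    apply ContDiff.sum; intro k _
    exact (((contDiff_apply_apply ℝ ℝ i k)).comp contDiff_fst).mul ((hcoord k).comp ha)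
  unfold projField
  exact hVa.sub ((ContDiff.inner ℝ (contDiff_fst.comp contDiff_snd) hVa).smul
    (contDiff_fst.comp contDiff_snd))

lemma exists_lip {A B : Type*} [NormedAddCommGroup A] [NormedSpace ℝ A]
    [FiniteDimensional ℝ A] [NormedAddCommGroup B] [NormedSpace ℝ B]
    (f : A → B) (hf : ContDiff ℝ 1 f) (r : ℝ) :
    ∃ C, 0 ≤ C ∧ ∀ p ∈ Metric.closedBall (0 : A) r, ∀ q ∈ Metric.closedBall (0 : A) r,
      ‖f p - f q‖ ≤ C * ‖p - q‖ := by
  obtain ⟨C, hC⟩ := (isCompact_closedBall (0 : A) r).exists_bound_of_continuousOn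
    ((hf.continuous_fderiv one_ne_zero).continuousOn)
  refine ⟨max C 0, le_max_right _ _, fun p hp q hq => ?_⟩
  exact Convex.norm_image_sub_le_of_norm_fderiv_le (fun z _ => hf.differentiable one_ne_zero z)
    (fun z hz => le_trans (hC z hz) (le_max_left _ _)) (convex_closedBall _ _) hq hp

/-- `Φ_V` is Lipschitz on the product of unit spheres (Euclidean metric on the product),
with a Lipschitz constant `M_P` uniform over all matrices `V` with entries bounded by `M`. -/
theorem projected_attention_uniform_lipschitz (d N : ℕ) (hd : 1 ≤ d) (hN : 1 ≤ N)
    (β : ℝ) (hβ : 0 < β) (Q K : Matrix (Fin d) (Fin d) ℝ) (M : ℝ) (hM : 0 < M) :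
    ∃ M_P : ℝ, 0 ≤ M_P ∧
      ∀ V : Matrix (Fin d) (Fin d) ℝ, (∀ k l, |V k l| ≤ M) →
        ∀ (x x' : EuclideanSpace ℝ (Fin d))
          (X X' : Fin N → EuclideanSpace ℝ (Fin d)),
          ‖x‖ = 1 → ‖x'‖ = 1 → (∀ j, ‖X j‖ = 1) → (∀ j, ‖X' j‖ = 1) →
            ‖projField d N β Q K V x X - projField d N β Q K V x' X'‖
              ≤ M_P * Real.sqrt (‖x - x'‖ ^ 2 + ∑ j, ‖X j - X' j‖ ^ 2) := by
  obtain ⟨C, hC0, hC⟩ := exists_lip _ (contDiff_F d N hN β Q K) (M + 1)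
  refine ⟨C, hC0, fun V hV x x' X X' hx hx' hX hX' => ?_⟩
  set s := Real.sqrt (‖x - x'‖ ^ 2 + ∑ j, ‖X j - X' j‖ ^ 2) with hs
  have hsum_nonneg : (0 : ℝ) ≤ ∑ j, ‖X j - X' j‖ ^ 2 :=
    Finset.sum_nonneg fun j _ => sq_nonneg _
  -- membership of the two points in the closed ball
  have hmem : ∀ (y : EuclideanSpace ℝ (Fin d)) (Y : Fin N → EuclideanSpace ℝ (Fin d)),
      ‖y‖ = 1 → (∀ j, ‖Y j‖ = 1) →
      ((fun k l => V k l, (y, Y)) :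
        (Fin d → Fin d → ℝ) × (EuclideanSpace ℝ (Fin d) × (Fin N → EuclideanSpace ℝ (Fin d))))
        ∈ Metric.closedBall 0 (M + 1) := by
    intro y Y hy hY
    rw [mem_closedBall_zero_iff, Prod.norm_def]
    apply max_le
    · refine le_trans ?_ (by linarith : M ≤ M + 1)
      rw [pi_norm_le_iff_of_nonneg hM.le]
      intro k
      rw [pi_norm_le_iff_of_nonneg hM.le]
      intro l
      simpa [Real.norm_eq_abs] using hV k l
    · rw [Prod.norm_def]
      apply max_le
      · rw [hy]; linarith
      · refine le_trans ?_ (by linarith : (1 : ℝ) ≤ M + 1)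
        rw [pi_norm_le_iff_of_nonneg zero_le_one]
        intro j; rw [hY j]
  -- bound the product norm of the difference by s
  have hdiff : ‖((fun k l => V k l, (x, X)) :
        (Fin d → Fin d → ℝ) × (EuclideanSpace ℝ (Fin d) × (Fin N → EuclideanSpace ℝ (Fin d))))
      - (fun k l => V k l, (x', X'))‖ ≤ s := by
    have hs0 : 0 ≤ s := Real.sqrt_nonneg _
    rw [Prod.norm_def]
    simp only [Prod.fst_sub, Prod.snd_sub]
    apply max_le
    · simpa using hs0
    · rw [Prod.norm_def]
      simp only [Prod.fst_sub, Prod.snd_sub]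
      apply max_le
      · rw [← Real.sqrt_sq (norm_nonneg (x - x'))]
        exact Real.sqrt_le_sqrt (le_add_of_nonneg_right hsum_nonneg)
      · rw [pi_norm_le_iff_of_nonneg hs0]
        intro j
        simp only [Pi.sub_apply]
        rw [← Real.sqrt_sq (norm_nonneg (X j - X' j))]
        apply Real.sqrt_le_sqrt
        calc ‖X j - X' j‖ ^ 2 ≤ ∑ i, ‖X i - X' i‖ ^ 2 :=
              Finset.single_le_sum (f := fun i => ‖X i - X' i‖ ^ 2) (fun i _ => sq_nonneg _) (Finset.mem_univ j)
          _ ≤ ‖x - x'‖ ^ 2 + ∑ i, ‖X i - X' i‖ ^ 2 := le_add_of_nonneg_left (sq_nonneg _)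
  have key := hC _ (hmem x X hx hX) _ (hmem x' X' hx' hX')
  have hVof : Matrix.of (fun k l => V k l) = V := rfl
  simp only [hVof] at key
  calc ‖projField d N β Q K V x X - projField d N β Q K V x' X'‖
      ≤ C * ‖((fun k l => V k l, (x, X)) :
        (Fin d → Fin d → ℝ) × (EuclideanSpace ℝ (Fin d) × (Fin N → EuclideanSpace ℝ (Fin d))))
          - (fun k l => V k l, (x', X'))‖ := key
    _ ≤ C * s := by
        exact mul_le_mul_of_nonneg_left hdiff hC0
end

section
/- Let d ≥ 2 be an integer, β > 0, and let x, y ∈ ℝ^d be unit vectors with z = ⟨x, y⟩. Define a = (1/2)(e^β x + e^{βz} y) and b = (1/2)(e^β y + e^{βz} x). Then ((1 − d)/2)·z·(‖a‖² + ‖b‖²) + (z² + d − 2)·⟨a, b⟩ = (1/4)(1 − z²)·( 2(d − 2) e^{β(1+z)} − z (e^{2β} + e^{2βz}) ). -/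
open RealInnerProductSpace Real

/-! With `p = e^β` and `q = e^{βz}` the attention outputs are `½(p x + q y)` and `½(p y + q x)`.
For unit `x, y` their Gram entries are quadratic in `p, q` with coefficients in `z`, and the
drift factors as `¼(1 − z²)(2(d − 2) p q − z (p² + q²))`; the exponentials enter only through
`p q = e^{β(1+z)}`, `p² = e^{2β}` and `q² = e^{2βz}`. -/

section Gram

variable {E : Type*} [NormedAddCommGroup E] [InnerProductSpace ℝ E] {x y : E}

theorem norm_sq_half_smul_add_smul (hx : ‖x‖ = 1) (hy : ‖y‖ = 1) (p q : ℝ) :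
    ‖(1 / 2 : ℝ) • (p • x + q • y)‖ ^ 2 = (p ^ 2 + 2 * p * q * ⟪x, y⟫ + q ^ 2) / 4 := by
  rw [norm_smul, mul_pow, norm_add_sq_real, norm_smul, norm_smul, real_inner_smul_left,
    real_inner_smul_right, hx, hy]
  simp only [Real.norm_eq_abs, mul_pow, sq_abs]
  ring

theorem inner_half_smul_add_smul_swap (hx : ‖x‖ = 1) (hy : ‖y‖ = 1) (p q : ℝ) :
    ⟪(1 / 2 : ℝ) • (p • x + q • y), (1 / 2 : ℝ) • (p • y + q • x)⟫
      = (2 * p * q + (p ^ 2 + q ^ 2) * ⟪x, y⟫) / 4 := by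
  have hxx : ⟪x, x⟫ = 1 := by rw [real_inner_self_eq_norm_sq, hx, one_pow]
  have hyy : ⟪y, y⟫ = 1 := by rw [real_inner_self_eq_norm_sq, hy, one_pow]
  simp only [inner_add_left, inner_add_right, real_inner_smul_left, real_inner_smul_right,
    hxx, hyy, real_inner_comm x y]
  ring

theorem overlap_drift_of_weights (hx : ‖x‖ = 1) (hy : ‖y‖ = 1) (d p q : ℝ) :
    ((1 - d) / 2) * ⟪x, y⟫ * (‖(1 / 2 : ℝ) • (p • x + q • y)‖ ^ 2
        + ‖(1 / 2 : ℝ) • (p • y + q • x)‖ ^ 2)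
      + (⟪x, y⟫ ^ 2 + d - 2) * ⟪(1 / 2 : ℝ) • (p • x + q • y), (1 / 2 : ℝ) • (p • y + q • x)⟫
      = (1 / 4) * (1 - ⟪x, y⟫ ^ 2) * (2 * (d - 2) * (p * q) - ⟪x, y⟫ * (p ^ 2 + q ^ 2)) := by
  rw [norm_sq_half_smul_add_smul hx hy, norm_sq_half_smul_add_smul hy hx, real_inner_comm x y,
    inner_half_smul_add_smul_swap hx hy]
  ring

end Gram

theorem overlap_drift_unnormalized_general (d : ℕ) (β : ℝ)
    (x y : EuclideanSpace ℝ (Fin d)) (hx : ‖x‖ = 1) (hy : ‖y‖ = 1)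
    (z : ℝ) (hz : z = ⟪x, y⟫)
    (a b : EuclideanSpace ℝ (Fin d))
    (ha : a = (1 / 2 : ℝ) • (exp β • x + exp (β * z) • y))
    (hb : b = (1 / 2 : ℝ) • (exp β • y + exp (β * z) • x)) :
    ((1 - (d : ℝ)) / 2) * z * (‖a‖ ^ 2 + ‖b‖ ^ 2) + (z ^ 2 + d - 2) * ⟪a, b⟫
      = (1 / 4) * (1 - z ^ 2)
          * (2 * ((d : ℝ) - 2) * exp (β * (1 + z)) - z * (exp (2 * β) + exp (2 * β * z))) := by
  have h_mul : exp (β * (1 + z)) = exp β * exp (β * z) := by rw [← exp_add]; ring_nf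
  have h_sq_left : exp (2 * β) = exp β ^ 2 := by rw [sq, ← exp_add, two_mul]
  have h_sq_right : exp (2 * β * z) = exp (β * z) ^ 2 := by rw [sq, ← exp_add]; ring_nf
  rw [ha, hb, h_mul, h_sq_left, h_sq_right, hz]
  exact overlap_drift_of_weights hx hy d _ _

/-- Explicit overlap drift for two tokens with unnormalized self-attention:
with `z = ⟨x, y⟩`, `a = ½(e^β x + e^{βz} y)`, `b = ½(e^β y + e^{βz} x)`,
`((1−d)/2) z (‖a‖² + ‖b‖²) + (z² + d − 2) ⟨a, b⟩
  = ¼ (1 − z²)(2(d−2)e^{β(1+z)} − z(e^{2β} + e^{2βz}))`. -/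
theorem overlap_drift_unnormalized (d : ℕ) (hd : 2 ≤ d) (β : ℝ) (hβ : 0 < β)
    (x y : EuclideanSpace ℝ (Fin d)) (hx : ‖x‖ = 1) (hy : ‖y‖ = 1)
    (z : ℝ) (hz : z = ⟪x, y⟫)
    (a b : EuclideanSpace ℝ (Fin d))
    (ha : a = (1 / 2 : ℝ) • (exp β • x + exp (β * z) • y))
    (hb : b = (1 / 2 : ℝ) • (exp β • y + exp (β * z) • x)) :
    ((1 - (d : ℝ)) / 2) * z * (‖a‖ ^ 2 + ‖b‖ ^ 2) + (z ^ 2 + d - 2) * ⟪a, b⟫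
      = (1 / 4) * (1 - z ^ 2)
          * (2 * ((d : ℝ) - 2) * exp (β * (1 + z)) - z * (exp (2 * β) + exp (2 * β * z))) :=
  overlap_drift_unnormalized_general d β x y hx hy z hz a b ha hb
end

section
/- Let d ≥ 2 be an integer, β > 0, and let x, y ∈ ℝ^d be unit vectors with z = ⟨x, y⟩. Define a' = (e^β x + e^{βz} y)/(e^β + e^{βz}) and b' = (e^β y + e^{βz} x)/(e^β + e^{βz}). Then: (i) ((1 − d)/2)·z·(‖a'‖² + ‖b'‖²) + (z² + d − 2)·⟨a', b'⟩ = (1 − z²)·( 2(d − 2) e^{β(1+z)} − z (e^{2β} + e^{2βz}) ) / (e^β + e^{βz})²; and (ii) (1 − z²)·( ‖a'‖² + ‖b'‖² − 2z⟨a', b'⟩ ) = 2 (1 − z²)²·( e^{2β} + e^{2βz} ) / (e^β + e^{βz})². -/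
open RealInnerProductSpace Real

/-!
Both coefficients only see the two symmetric functions `p² + q²` and `pq` of the softmax
weights `p = e^β / S`, `q = e^{βz} / S` (with `S = e^β + e^{βz}`): for unit `x, y` one has
`‖a'‖² + ‖b'‖² = 2(p² + q²) + 4pqz` and `⟪a', b'⟫ = 2pq + (p² + q²)z`. Substituting, (i) becomes
`(1 − z²)(2(d − 2)pq − z(p² + q²))` and (ii) becomes `2(1 − z²)²(p² + q²)`, and
`p² + q² = (e^{2β} + e^{2βz}) / S²`, `pq = e^{β(1+z)} / S²`.
-/

section SwappedCombination

variable {E : Type*} [NormedAddCommGroup E] [InnerProductSpace ℝ E] {x y : E}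

theorem norm_sq_add_norm_sq_smul_add_smul_swap (hx : ‖x‖ = 1) (hy : ‖y‖ = 1) (p q : ℝ) :
    ‖p • x + q • y‖ ^ 2 + ‖p • y + q • x‖ ^ 2 = 2 * (p ^ 2 + q ^ 2) + 4 * (p * q) * ⟪x, y⟫ := by
  rw [← real_inner_self_eq_norm_sq, ← real_inner_self_eq_norm_sq]
  simp only [inner_add_left, inner_add_right, real_inner_smul_left, real_inner_smul_right,
    real_inner_comm y x, real_inner_self_eq_norm_sq, norm_smul, mul_pow, norm_eq_abs, sq_abs, hx,
    hy]
  ring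

theorem inner_smul_add_smul_swap (hx : ‖x‖ = 1) (hy : ‖y‖ = 1) (p q : ℝ) :
    ⟪p • x + q • y, p • y + q • x⟫ = 2 * (p * q) + (p ^ 2 + q ^ 2) * ⟪x, y⟫ := by
  simp only [inner_add_left, inner_add_right, real_inner_smul_left, real_inner_smul_right,
    real_inner_comm y x, real_inner_self_eq_norm_sq, hx, hy]
  ring

end SwappedCombination

theorem inv_smul_add_smul {K E : Type*} [DivisionRing K] [AddCommGroup E] [Module K E]
    (S p q : K) (x y : E) :
    S⁻¹ • (p • x + q • y) = (S⁻¹ * p) • x + (S⁻¹ * q) • y := by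
  rw [smul_add, smul_smul, smul_smul]

theorem overlap_coefficients_normalized_general (d : ℕ) (β : ℝ)
    (x y : EuclideanSpace ℝ (Fin d)) (hx : ‖x‖ = 1) (hy : ‖y‖ = 1)
    (z : ℝ) (hz : z = ⟪x, y⟫)
    (a' b' : EuclideanSpace ℝ (Fin d))
    (ha : a' = (exp β + exp (β * z))⁻¹ • (exp β • x + exp (β * z) • y))
    (hb : b' = (exp β + exp (β * z))⁻¹ • (exp β • y + exp (β * z) • x)) :
    (((1 - (d : ℝ)) / 2) * z * (‖a'‖ ^ 2 + ‖b'‖ ^ 2) + (z ^ 2 + d - 2) * ⟪a', b'⟫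
        = (1 - z ^ 2)
            * (2 * ((d : ℝ) - 2) * exp (β * (1 + z)) - z * (exp (2 * β) + exp (2 * β * z)))
            / (exp β + exp (β * z)) ^ 2) ∧
    ((1 - z ^ 2) * (‖a'‖ ^ 2 + ‖b'‖ ^ 2 - 2 * z * ⟪a', b'⟫)
        = 2 * (1 - z ^ 2) ^ 2 * (exp (2 * β) + exp (2 * β * z))
            / (exp β + exp (β * z)) ^ 2) := by
  set S := exp β + exp (β * z)
  clear_value S
  set p := S⁻¹ * exp β
  set q := S⁻¹ * exp (β * z)
  rw [inv_smul_add_smul] at ha hb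
  have hnorms : ‖a'‖ ^ 2 + ‖b'‖ ^ 2 = 2 * (p ^ 2 + q ^ 2) + 4 * (p * q) * z := by
    rw [ha, hb, norm_sq_add_norm_sq_smul_add_smul_swap hx hy, ← hz]
  have hinner : ⟪a', b'⟫ = 2 * (p * q) + (p ^ 2 + q ^ 2) * z := by
    rw [ha, hb, inner_smul_add_smul_swap hx hy, ← hz]
  have hsq : p ^ 2 + q ^ 2 = (exp (2 * β) + exp (2 * β * z)) / S ^ 2 := by
    rw [two_mul, add_mul, exp_add, exp_add]
    simp only [p, q]
    ring
  have hprod : p * q = exp (β * (1 + z)) / S ^ 2 := by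
    rw [mul_one_add, exp_add]
    simp only [p, q]
    ring
  rw [hnorms, hinner]
  constructor
  · calc _ = (1 - z ^ 2) * (2 * ((d : ℝ) - 2) * (p * q) - z * (p ^ 2 + q ^ 2)) := by ring
      _ = _ := by rw [hprod, hsq]; ring
  · calc _ = 2 * (1 - z ^ 2) ^ 2 * (p ^ 2 + q ^ 2) := by ring
      _ = _ := by rw [hsq]; ring

/-- Explicit overlap drift and squared diffusion coefficient for two tokens with
normalized (softmax) self-attention: with `z = ⟨x, y⟩`,
`a' = (e^β x + e^{βz} y)/(e^β + e^{βz})`, `b' = (e^β y + e^{βz} x)/(e^β + e^{βz})`,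
(i) `((1−d)/2) z (‖a'‖² + ‖b'‖²) + (z² + d − 2)⟨a', b'⟩
  = (1 − z²)(2(d−2)e^{β(1+z)} − z(e^{2β} + e^{2βz})) / (e^β + e^{βz})²`;
(ii) `(1 − z²)(‖a'‖² + ‖b'‖² − 2z⟨a', b'⟩) = 2(1 − z²)²(e^{2β} + e^{2βz}) / (e^β + e^{βz})²`. -/
theorem overlap_coefficients_normalized (d : ℕ) (hd : 2 ≤ d) (β : ℝ) (hβ : 0 < β)
    (x y : EuclideanSpace ℝ (Fin d)) (hx : ‖x‖ = 1) (hy : ‖y‖ = 1)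
    (z : ℝ) (hz : z = ⟪x, y⟫)
    (a' b' : EuclideanSpace ℝ (Fin d))
    (ha : a' = (exp β + exp (β * z))⁻¹ • (exp β • x + exp (β * z) • y))
    (hb : b' = (exp β + exp (β * z))⁻¹ • (exp β • y + exp (β * z) • x)) :
    (((1 - (d : ℝ)) / 2) * z * (‖a'‖ ^ 2 + ‖b'‖ ^ 2) + (z ^ 2 + d - 2) * ⟪a', b'⟫
        = (1 - z ^ 2)
            * (2 * ((d : ℝ) - 2) * exp (β * (1 + z)) - z * (exp (2 * β) + exp (2 * β * z)))
            / (exp β + exp (β * z)) ^ 2) ∧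
    ((1 - z ^ 2) * (‖a'‖ ^ 2 + ‖b'‖ ^ 2 - 2 * z * ⟪a', b'⟫)
        = 2 * (1 - z ^ 2) ^ 2 * (exp (2 * β) + exp (2 * β * z))
            / (exp β + exp (β * z)) ^ 2) :=
  overlap_coefficients_normalized_general d β x y hx hy z hz a' b' ha hb
end

section
/- Fix integers d, N ≥ 1, β > 0, Q, K ∈ ℝ^{d×d}, and an initial configuration X₀ = (X₀^1,…, X₀^N) with each X₀^i on the unit sphere of ℝ^d. Suppose Y = (Y^1,…, Y^N) : [0, 1] → (ℝ^d)^N is differentiable, each Y^i(t) lies on the unit sphere, Y(0) = X₀, and (Y^i)'(t) = P^⊥_{Y^i(t)}[ A^S_β(Y^i(t), Y(t)) ] for all t ∈ [0,1] and all i. For each integer L ≥ 2 define the discrete scheme X_0 = X₀ and X^i_{n+1} = ( X^i_n + (1/L) A^S_β(X^i_n, X_n) ) / ‖ X^i_n + (1/L) A^S_β(X^i_n, X_n) ‖ for 0 ≤ n ≤ L − 1. Then max over 1 ≤ i ≤ N and 0 ≤ n ≤ L of ‖ X^i_n − Y^i(n/L) ‖ tends to 0 as L → ∞. -/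
open RealInnerProductSpace

/-- The discrete normalized residual attention scheme with step `1/L`:
`X₀` at time `0`, and
`X^i_{n+1} = (X^i_n + (1/L) A^S_β(X^i_n, X_n)) / ‖X^i_n + (1/L) A^S_β(X^i_n, X_n)‖`. -/
noncomputable def scheme (d N : ℕ) (β : ℝ) (Q K : Matrix (Fin d) (Fin d) ℝ)
    (X₀ : Fin N → EuclideanSpace ℝ (Fin d)) (L : ℕ) :
    ℕ → Fin N → EuclideanSpace ℝ (Fin d)
  | 0 => X₀
  | n + 1 => fun i =>
      (‖scheme d N β Q K X₀ L n i
          + (1 / (L : ℝ)) • attnS d N β Q K (scheme d N β Q K X₀ L n i)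
              (scheme d N β Q K X₀ L n)‖)⁻¹ •
        (scheme d N β Q K X₀ L n i
          + (1 / (L : ℝ)) • attnS d N β Q K (scheme d N β Q K X₀ L n i)
              (scheme d N β Q K X₀ L n))

section Aux
variable {d N : ℕ} {β : ℝ} {Q K : Matrix (Fin d) (Fin d) ℝ}

local notation "P" => EuclideanSpace ℝ (Fin d)
local notation "E" => (Fin N → EuclideanSpace ℝ (Fin d))

lemma attn_norm_le (hN : 1 ≤ N) (x : P) (X : Fin N → P) (hX : ∀ j, ‖X j‖ ≤ 1) :
    ‖attnS d N β Q K x X‖ ≤ 1 := by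
  have hne : Nonempty (Fin N) := ⟨⟨0, hN⟩⟩
  set w : Fin N → ℝ := fun j => Real.exp (β * ∑ i, Q.mulVec x i * K.mulVec (X j) i) with hw
  have hS : 0 < ∑ j, w j :=
    Finset.sum_pos (fun j _ => Real.exp_pos _) Finset.univ_nonempty
  have h1 : ‖∑ j, w j • X j‖ ≤ ∑ j, w j := by
    refine (norm_sum_le _ _).trans ?_
    refine Finset.sum_le_sum fun j _ => ?_
    rw [norm_smul, Real.norm_eq_abs, abs_of_pos (Real.exp_pos _)]
    exact mul_le_of_le_one_right (Real.exp_pos _).le (hX j)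
  rw [attnS, norm_smul, Real.norm_eq_abs, abs_of_pos (inv_pos.2 hS)]
  calc (∑ j, w j)⁻¹ * ‖∑ j, w j • X j‖ ≤ (∑ j, w j)⁻¹ * (∑ j, w j) :=
        mul_le_mul_of_nonneg_left h1 (inv_pos.2 hS).le
    _ = 1 := inv_mul_cancel₀ hS.ne'

lemma contDiff_attn (hN : 1 ≤ N) (i : Fin N) :
    ContDiff ℝ 1 (fun X : E => attnS d N β Q K (X i) X) := by
  have hne : Nonempty (Fin N) := ⟨⟨0, hN⟩⟩
  have hmv : ∀ (M : Matrix (Fin d) (Fin d) ℝ) (j : Fin N) (k : Fin d),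
      ContDiff ℝ 1 (fun X : E => M.mulVec (X j) k) := by
    intro M j k
    have : (fun X : E => M.mulVec (X j) k)
        = fun X : E => ∑ m, M k m * EuclideanSpace.proj m (X j) := by
      funext X
      simp [Matrix.mulVec, dotProduct]
    rw [this]
    exact ContDiff.sum fun m _ => contDiff_const.mul
      ((EuclideanSpace.proj m).comp
        (ContinuousLinearMap.proj (φ := fun _ : Fin N => EuclideanSpace ℝ (Fin d)) j)).contDiff
  have hw : ∀ j : Fin N, ContDiff ℝ 1
      (fun X : E => Real.exp (β * ∑ k, Q.mulVec (X i) k * K.mulVec (X j) k)) := by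
    intro j
    exact Real.contDiff_exp.comp (contDiff_const.mul
      (ContDiff.sum fun k _ => (hmv Q i k).mul (hmv K j k)))
  have hS : ContDiff ℝ 1
      (fun X : E => ∑ j, Real.exp (β * ∑ k, Q.mulVec (X i) k * K.mulVec (X j) k)) :=
    ContDiff.sum fun j _ => hw j
  have hSne : ∀ X : E,
      (∑ j, Real.exp (β * ∑ k, Q.mulVec (X i) k * K.mulVec (X j) k)) ≠ 0 := fun X =>
    (Finset.sum_pos (fun j _ => Real.exp_pos _) Finset.univ_nonempty).ne'
  have hnum : ContDiff ℝ 1 (fun X : E =>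
      ∑ j, Real.exp (β * ∑ k, Q.mulVec (X i) k * K.mulVec (X j) k) • X j) :=
    ContDiff.sum fun j _ => (hw j).smul (ContinuousLinearMap.proj (R := ℝ) (φ := fun _ : Fin N => EuclideanSpace ℝ (Fin d)) j).contDiff
  exact (hS.inv hSne).smul hnum

/-- The projected attention vector field on configurations. -/
noncomputable def Ffield (d N : ℕ) (β : ℝ) (Q K : Matrix (Fin d) (Fin d) ℝ)
    (X : Fin N → EuclideanSpace ℝ (Fin d)) : Fin N → EuclideanSpace ℝ (Fin d) :=
  fun i => attnS d N β Q K (X i) X - ⟪X i, attnS d N β Q K (X i) X⟫ • X i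

set_option maxHeartbeats 1000000 in
lemma contDiff_Ffield (hN : 1 ≤ N) : ContDiff ℝ 1 (Ffield d N β Q K : E → E) := by
  refine contDiff_pi.2 fun i => ?_
  exact (contDiff_attn hN i).sub
    (((ContinuousLinearMap.proj i).contDiff.inner ℝ (contDiff_attn hN i)).smul
      (ContinuousLinearMap.proj i).contDiff)

lemma Ffield_norm_le (hN : 1 ≤ N) (X : Fin N → P) (hX : ∀ j, ‖X j‖ = 1) (i : Fin N) :
    ‖Ffield d N β Q K X i‖ ≤ 2 := by
  have ha := attn_norm_le (β := β) (Q := Q) (K := K) hN (X i) X (fun j => (hX j).le)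
  have hinner : |⟪X i, attnS d N β Q K (X i) X⟫| ≤ 1 := by
    refine (abs_real_inner_le_norm _ _).trans ?_
    rw [hX i, one_mul]; exact ha
  calc ‖Ffield d N β Q K X i‖
      ≤ ‖attnS d N β Q K (X i) X‖ + ‖⟪X i, attnS d N β Q K (X i) X⟫ • X i‖ :=
        norm_sub_le _ _
    _ ≤ 1 + 1 := by
        refine add_le_add ha ?_
        rw [norm_smul, Real.norm_eq_abs, hX i, mul_one]; exact hinner
    _ = 2 := by norm_num

set_option maxHeartbeats 1000000 in
lemma normalize_step (x a : P) (hx : ‖x‖ = 1) (ha : ‖a‖ ≤ 1)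
    (h : ℝ) (h0 : 0 < h) (h2 : h ≤ 1/2) :
    ‖(‖x + h • a‖)⁻¹ • (x + h • a) - (x + h • (a - ⟪x, a⟫ • x))‖ ≤ 10 * h^2 := by
  set v : EuclideanSpace ℝ (Fin d) := x + h • a with hv
  set r : ℝ := ‖v‖ with hr
  set c : ℝ := ⟪x, a⟫ with hc
  have hna : 0 ≤ ‖a‖ := norm_nonneg a
  have hcabs : |c| ≤ 1 := by
    refine (abs_real_inner_le_norm _ _).trans ?_
    rw [hx, one_mul]; exact ha
  have hrub : r ≤ 1 + h := by
    calc r ≤ ‖x‖ + ‖h • a‖ := norm_add_le _ _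
      _ ≤ 1 + h := by
          rw [hx, norm_smul, Real.norm_eq_abs, abs_of_pos h0]
          nlinarith
  have hrlb : 1 - h ≤ r := by
    have h1 : ‖x‖ - ‖v‖ ≤ ‖x - v‖ := norm_sub_norm_le x v
    have hxv : ‖x - v‖ ≤ h := by
      have h3 : x - v = -(h • a) := by rw [hv]; abel
      rw [h3, norm_neg, norm_smul, Real.norm_eq_abs, abs_of_pos h0]
      nlinarith
    rw [hx] at h1
    linarith
  have hrpos : (0:ℝ) < r := by linarith
  have hr2 : r^2 = 1 + 2*(h*c) + h^2*‖a‖^2 := by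
    rw [hr, hv, @norm_add_sq_real, hx, real_inner_smul_right, norm_smul,
      Real.norm_eq_abs, abs_of_pos h0]
    ring
  have hiden : (‖x + h • a‖)⁻¹ • (x + h • a) - (x + h • (a - ⟪x, a⟫ • x))
      = (r⁻¹ - (1 - h*c)) • v - (h^2*c) • a := by
    rw [hv, hr, hc]
    module
  rw [hiden]
  have key2 : |r⁻¹ - (1 - h*c)| ≤ 6*h^2 := by
    have key : |1 - r*(1 - h*c)| ≤ 3*h^2 := by
      have hfac : (1 - r*(1 - h*c))*(r+1) = h*c*((r-1)*(r+2)) - h^2*‖a‖^2 := by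
        linear_combination (-1 : ℝ) * hr2
      have habs1 : |r - 1| ≤ h := abs_le.2 ⟨by linarith, by linarith⟩
      have habs2 : |r + 2| ≤ 3 + h := abs_le.2 ⟨by linarith, by linarith⟩
      have hA : |h*c*((r-1)*(r+2))| ≤ h*(h*(3+h)) := by
        rw [abs_mul, abs_mul, abs_mul, abs_of_pos h0]
        have e1 : |c| * (|r-1| * |r+2|) ≤ 1 * (h * (3+h)) := by
          refine mul_le_mul hcabs ?_ (by positivity) zero_le_one
          exact mul_le_mul habs1 habs2 (abs_nonneg _) h0.le
        nlinarith [abs_nonneg c, abs_nonneg (r-1), abs_nonneg (r+2)]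
      have hB : |h^2*‖a‖^2| ≤ h^2 := by
        rw [abs_mul, abs_of_pos (by positivity : (0:ℝ) < h^2),
          abs_of_nonneg (sq_nonneg ‖a‖)]
        have hsq : ‖a‖^2 ≤ 1 := by nlinarith
        nlinarith [mul_le_mul_of_nonneg_left hsq (sq_nonneg h)]
      have h3 : |1 - r*(1 - h*c)| * (r+1) ≤ h*(h*(3+h)) + h^2 := by
        calc |1 - r*(1 - h*c)| * (r+1) = |(1 - r*(1 - h*c))*(r+1)| := by
              rw [abs_mul, abs_of_pos (by linarith : (0:ℝ) < r+1)]
          _ = |h*c*((r-1)*(r+2)) - h^2*‖a‖^2| := by rw [hfac]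
          _ ≤ |h*c*((r-1)*(r+2))| + |h^2*‖a‖^2| := abs_sub _ _
          _ ≤ h*(h*(3+h)) + h^2 := add_le_add hA hB
      nlinarith [abs_nonneg (1 - r*(1 - h*c))]
    have heq : r⁻¹ - (1 - h*c) = (1 - r*(1 - h*c)) / r := by
      field_simp
    rw [heq, abs_div, abs_of_pos hrpos, div_le_iff₀ hrpos]
    nlinarith [sq_nonneg h]
  calc ‖(r⁻¹ - (1 - h*c)) • v - (h^2*c) • a‖
      ≤ ‖(r⁻¹ - (1 - h*c)) • v‖ + ‖(h^2*c) • a‖ := norm_sub_le _ _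
    _ = |r⁻¹ - (1 - h*c)| * r + |h^2*c| * ‖a‖ := by
        rw [norm_smul, norm_smul, Real.norm_eq_abs, Real.norm_eq_abs, hr]
    _ ≤ 6*h^2 * (1+h) + h^2 := by
        refine add_le_add (mul_le_mul key2 hrub hrpos.le (by positivity)) ?_
        have e2 : |h^2*c| ≤ h^2 := by
          rw [abs_mul, abs_of_pos (by positivity : (0:ℝ) < h^2)]
          nlinarith
        have e3 := mul_le_mul e2 ha hna (by positivity : (0:ℝ) ≤ h^2)
        nlinarith
    _ ≤ 10 * h^2 := by nlinarith

lemma scheme_sphere (hN : 1 ≤ N) (X₀ : Fin N → P) (hX₀ : ∀ i, ‖X₀ i‖ = 1)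
    {L : ℕ} (hL : 2 ≤ L) : ∀ n, ∀ i, ‖scheme d N β Q K X₀ L n i‖ = 1 := by
  intro n
  induction n with
  | zero => exact hX₀
  | succ n ih =>
    intro i
    have hL2 : (2:ℝ) ≤ L := by exact_mod_cast hL
    have hLpos : (0:ℝ) < L := by linarith
    have hh : (0:ℝ) < 1/(L:ℝ) := by positivity
    have ha := attn_norm_le (β := β) (Q := Q) (K := K) hN
      (scheme d N β Q K X₀ L n i) (scheme d N β Q K X₀ L n) (fun j => (ih j).le)
    simp only [scheme]
    set z := scheme d N β Q K X₀ L n i with hz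
    set w := (1/(L:ℝ)) • attnS d N β Q K (scheme d N β Q K X₀ L n i) (scheme d N β Q K X₀ L n)
      with hwdef
    have h1 : ‖z‖ - ‖z + w‖ ≤ ‖z - (z + w)‖ := norm_sub_norm_le _ _
    have h2 : ‖z - (z + w)‖ = ‖w‖ := by rw [show z - (z + w) = -w by abel, norm_neg]
    have h3 : ‖w‖ ≤ 1/(L:ℝ) := by
      rw [hwdef, norm_smul, Real.norm_eq_abs, abs_of_pos hh]
      exact mul_le_of_le_one_right hh.le ha
    have h4 : ‖z‖ = 1 := ih i
    have h5 : (1:ℝ)/(L:ℝ) ≤ 1/2 := by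
      rw [div_le_div_iff₀ hLpos (by norm_num)]
      linarith
    have hrpos : (0:ℝ) < ‖z + w‖ := by linarith
    rw [norm_smul, Real.norm_eq_abs, abs_of_pos (inv_pos.2 hrpos), inv_mul_cancel₀ hrpos.ne']

end Aux

set_option maxHeartbeats 2000000 in
/-- Deterministic strong convergence: the discrete normalized residual scheme with
step `1/L` converges, uniformly over tokens `i` and steps `n ≤ L`, to the solution of
the attention flow `(Yⁱ)' = P⊥_{Yⁱ}[A^S_β(Yⁱ, Y)]` on the product of unit spheres. -/
theorem deterministic_scheme_uniform_convergence (d N : ℕ) (hd : 1 ≤ d) (hN : 1 ≤ N)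
    (β : ℝ) (hβ : 0 < β) (Q K : Matrix (Fin d) (Fin d) ℝ)
    (X₀ : Fin N → EuclideanSpace ℝ (Fin d)) (hX₀ : ∀ i, ‖X₀ i‖ = 1)
    (Y : ℝ → Fin N → EuclideanSpace ℝ (Fin d))
    (hY0 : Y 0 = X₀)
    (hYsph : ∀ t ∈ Set.Icc (0 : ℝ) 1, ∀ i, ‖Y t i‖ = 1)
    (hYode : ∀ t ∈ Set.Icc (0 : ℝ) 1, ∀ i,
      HasDerivWithinAt (fun s => Y s i)
        (attnS d N β Q K (Y t i) (Y t)
          - ⟪Y t i, attnS d N β Q K (Y t i) (Y t)⟫ • Y t i)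
        (Set.Icc (0 : ℝ) 1) t) :
    ∀ ε > (0 : ℝ), ∃ L₀ : ℕ, 2 ≤ L₀ ∧
      ∀ L : ℕ, L₀ ≤ L → ∀ i : Fin N, ∀ n : ℕ, n ≤ L →
        ‖scheme d N β Q K X₀ L n i - Y ((n : ℝ) / (L : ℝ)) i‖ ≤ ε := by
  intro ε hε
  have hNE : Nonempty (Fin N) := ⟨⟨0, hN⟩⟩
  set F : (Fin N → EuclideanSpace ℝ (Fin d)) → (Fin N → EuclideanSpace ℝ (Fin d)) :=
    Ffield d N β Q K with hFdef
  have hF : ContDiff ℝ 1 F := contDiff_Ffield hN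
  obtain ⟨M, hM⟩ :=
    (isCompact_closedBall (0 : Fin N → EuclideanSpace ℝ (Fin d)) 1).exists_bound_of_continuousOn
      (hF.continuous_fderiv one_ne_zero).continuousOn
  set C : ℝ := max M 1 with hCdef
  have hC1 : (1:ℝ) ≤ C := le_max_right _ _
  have hC0 : (0:ℝ) < C := lt_of_lt_of_le one_pos hC1
  have hFlip : ∀ u v : Fin N → EuclideanSpace ℝ (Fin d), ‖u‖ ≤ 1 → ‖v‖ ≤ 1 →
      ‖F u - F v‖ ≤ C * ‖u - v‖ := by
    intro u v hu hv
    exact (convex_closedBall (0 : Fin N → EuclideanSpace ℝ (Fin d))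
        1).norm_image_sub_le_of_norm_hasFDerivWithin_le
      (fun y _ => ((hF.differentiable one_ne_zero) y).hasFDerivAt.hasFDerivWithinAt)
      (fun y hy => (hM y hy).trans (le_max_left _ _))
      (mem_closedBall_zero_iff.2 hv) (mem_closedBall_zero_iff.2 hu)
  have hpi : ∀ (X : Fin N → EuclideanSpace ℝ (Fin d)), (∀ i, ‖X i‖ = 1) → ‖X‖ ≤ 1 :=
    fun X hX => (pi_norm_le_iff_of_nonneg zero_le_one).2 fun i => (hX i).le
  have hYmem : ∀ t ∈ Set.Icc (0:ℝ) 1, ‖Y t‖ ≤ 1 := fun t ht => hpi _ (hYsph t ht)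
  have hYder : ∀ t ∈ Set.Icc (0:ℝ) 1, HasDerivWithinAt Y (F (Y t)) (Set.Icc (0:ℝ) 1) t :=
    fun t ht => hasDerivWithinAt_pi.2 fun i => hYode t ht i
  have hFY2 : ∀ t ∈ Set.Icc (0:ℝ) 1, ‖F (Y t)‖ ≤ 2 := fun t ht =>
    (pi_norm_le_iff_of_nonneg (by norm_num)).2 fun i => Ffield_norm_le hN _ (hYsph t ht) i
  have hYlip : ∀ s ∈ Set.Icc (0:ℝ) 1, ∀ t ∈ Set.Icc (0:ℝ) 1, ‖Y s - Y t‖ ≤ 2 * |s - t| := by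
    intro s hs t ht
    have := (convex_Icc (0:ℝ) 1).norm_image_sub_le_of_norm_hasDerivWithin_le
      (fun u hu => hYder u hu) (fun u hu => hFY2 u hu) ht hs
    simpa [Real.norm_eq_abs] using this
  have hTaylor : ∀ t ∈ Set.Icc (0:ℝ) 1, ∀ h : ℝ, 0 ≤ h → t + h ∈ Set.Icc (0:ℝ) 1 →
      ‖Y (t+h) - Y t - h • F (Y t)‖ ≤ 2*C*h^2 := by
    intro t ht h h0 hth
    have hsub : Set.Icc t (t+h) ⊆ Set.Icc (0:ℝ) 1 := Set.Icc_subset_Icc ht.1 hth.2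
    have hg : ∀ u ∈ Set.Icc t (t+h),
        HasDerivWithinAt (fun s => Y s - (s - t) • F (Y t)) (F (Y u) - F (Y t))
          (Set.Icc t (t+h)) u := by
      intro u hu
      have h1 := (hYder u (hsub hu)).mono hsub
      have h2 : HasDerivWithinAt (fun s : ℝ => (s - t) • F (Y t)) ((1:ℝ) • F (Y t))
          (Set.Icc t (t+h)) u :=
        ((hasDerivWithinAt_id u _).sub_const t).smul_const _
      have h3 := h1.sub h2
      rw [one_smul] at h3
      exact h3
    have hbound : ∀ u ∈ Set.Icc t (t+h), ‖F (Y u) - F (Y t)‖ ≤ C * (2*h) := by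
      intro u hu
      refine (hFlip (Y u) (Y t) (hYmem u (hsub hu)) (hYmem t ht)).trans ?_
      have h3 := hYlip u (hsub hu) t ht
      have h4 : |u - t| ≤ h := by
        rw [abs_of_nonneg (by linarith [hu.1])]
        linarith [hu.2]
      nlinarith [norm_nonneg (Y u - Y t)]
    have hmv := (convex_Icc t (t+h)).norm_image_sub_le_of_norm_hasDerivWithin_le
      hg hbound (Set.left_mem_Icc.2 (by linarith)) (Set.right_mem_Icc.2 (by linarith))
    have he : (Y (t+h) - ((t+h) - t) • F (Y t)) - (Y t - ((t:ℝ) - t) • F (Y t))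
        = Y (t+h) - Y t - h • F (Y t) := by
      rw [show (t+h) - t = h by ring, sub_self, zero_smul, sub_zero]
      abel
    rw [he, show ‖(t+h) - t‖ = h by
      rw [show (t+h) - t = h by ring, Real.norm_eq_abs, abs_of_nonneg h0]] at hmv
    have : C*(2*h)*h = 2*C*h^2 := by ring
    linarith
  set D : ℝ := 10 + 2*C with hDdef
  have hD0 : (0:ℝ) < D := by rw [hDdef]; linarith
  set B : ℝ := D/C * (Real.exp C - 1) with hBdef
  have hexp1 : (1:ℝ) ≤ Real.exp C := by
    rw [← Real.exp_zero]; exact Real.exp_le_exp.2 hC0.le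
  have hB0 : (0:ℝ) ≤ B := by
    rw [hBdef]
    exact mul_nonneg (div_nonneg hD0.le hC0.le) (by linarith)
  refine ⟨max 2 (⌈B/ε⌉₊ + 1), le_max_left _ _, ?_⟩
  intro L hLL i n hn
  have hL2 : 2 ≤ L := le_trans (le_max_left _ _) hLL
  have hL2R : (2:ℝ) ≤ L := by exact_mod_cast hL2
  have hLpos : (0:ℝ) < L := by linarith
  set h : ℝ := 1/(L:ℝ) with hhdef
  have hh0 : 0 < h := by rw [hhdef]; positivity
  have hh2 : h ≤ 1/2 := by
    rw [hhdef, div_le_div_iff₀ hLpos (by norm_num)]; linarith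
  have hhL : h * L = 1 := by rw [hhdef]; field_simp
  have hsph := scheme_sphere (β := β) (Q := Q) (K := K) hN X₀ hX₀ hL2
  have key : ∀ m : ℕ, m ≤ L →
      ‖scheme d N β Q K X₀ L m - Y ((m:ℝ)*h)‖ ≤ D*h/C * ((1+C*h)^m - 1) := by
    intro m
    induction m with
    | zero => intro _; simp [scheme, hY0]
    | succ m ih =>
      intro hm1
      have hm : m ≤ L := Nat.le_of_succ_le hm1
      have ihm := ih hm
      have hmL : (m:ℝ) + 1 ≤ L := by exact_mod_cast hm1
      have ht0 : (0:ℝ) ≤ (m:ℝ)*h := by positivity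
      have hm0 : (0:ℝ) ≤ (m:ℝ) := Nat.cast_nonneg m
      have ht1' : ((m:ℝ)+1)*h ≤ 1 := by
        rw [hhdef, mul_one_div, div_le_one hLpos]; exact hmL
      have htmem : (m:ℝ)*h ∈ Set.Icc (0:ℝ) 1 := ⟨ht0, by nlinarith⟩
      have hthmem : (m:ℝ)*h + h ∈ Set.Icc (0:ℝ) 1 := ⟨by positivity, by nlinarith⟩
      set Xn := scheme d N β Q K X₀ L m with hXn
      have hXnsph : ∀ j, ‖Xn j‖ = 1 := hsph m
      have hXnnorm : ‖Xn‖ ≤ 1 := hpi _ hXnsph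
      have hcast : ((m+1:ℕ):ℝ)*h = (m:ℝ)*h + h := by push_cast; ring
      rw [hcast]
      have hterm1 : ‖scheme d N β Q K X₀ L (m+1) - (Xn + h • F Xn)‖ ≤ 10*h^2 := by
        refine (pi_norm_le_iff_of_nonneg (by positivity)).2 fun j => ?_
        have hstep := normalize_step (Xn j) (attnS d N β Q K (Xn j) Xn) (hXnsph j)
          (attn_norm_le hN _ _ fun k => (hXnsph k).le) h hh0 hh2
        exact hstep
      have hterm2 : ‖(Xn + h • F Xn) - (Y ((m:ℝ)*h) + h • F (Y ((m:ℝ)*h)))‖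
          ≤ (1 + C*h) * ‖Xn - Y ((m:ℝ)*h)‖ := by
        have hrw : (Xn + h • F Xn) - (Y ((m:ℝ)*h) + h • F (Y ((m:ℝ)*h)))
            = (Xn - Y ((m:ℝ)*h)) + h • (F Xn - F (Y ((m:ℝ)*h))) := by
          rw [smul_sub]; abel
        rw [hrw]
        refine (norm_add_le _ _).trans ?_
        rw [norm_smul, Real.norm_eq_abs, abs_of_pos hh0]
        have := hFlip Xn (Y ((m:ℝ)*h)) hXnnorm (hYmem _ htmem)
        nlinarith [norm_nonneg (Xn - Y ((m:ℝ)*h))]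
      have hterm3 : ‖(Y ((m:ℝ)*h) + h • F (Y ((m:ℝ)*h))) - Y ((m:ℝ)*h + h)‖ ≤ 2*C*h^2 := by
        have ht := hTaylor ((m:ℝ)*h) htmem h hh0.le hthmem
        have hrw : (Y ((m:ℝ)*h) + h • F (Y ((m:ℝ)*h))) - Y ((m:ℝ)*h + h)
            = -(Y ((m:ℝ)*h + h) - Y ((m:ℝ)*h) - h • F (Y ((m:ℝ)*h))) := by abel
        rw [hrw, norm_neg]; exact ht
      have hsplit : scheme d N β Q K X₀ L (m+1) - Y ((m:ℝ)*h + h)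
          = (scheme d N β Q K X₀ L (m+1) - (Xn + h • F Xn))
            + ((Xn + h • F Xn) - (Y ((m:ℝ)*h) + h • F (Y ((m:ℝ)*h))))
            + ((Y ((m:ℝ)*h) + h • F (Y ((m:ℝ)*h))) - Y ((m:ℝ)*h + h)) := by abel
      have halg : 10*h^2 + (1+C*h) * (D*h/C * ((1+C*h)^m - 1)) + 2*C*h^2
          = D*h/C * ((1+C*h)^(m+1) - 1) := by
        rw [pow_succ, hDdef]
        field_simp
        ring
      calc ‖scheme d N β Q K X₀ L (m+1) - Y ((m:ℝ)*h + h)‖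
          ≤ ‖scheme d N β Q K X₀ L (m+1) - (Xn + h • F Xn)‖
            + ‖(Xn + h • F Xn) - (Y ((m:ℝ)*h) + h • F (Y ((m:ℝ)*h)))‖
            + ‖(Y ((m:ℝ)*h) + h • F (Y ((m:ℝ)*h))) - Y ((m:ℝ)*h + h)‖ := by
            rw [hsplit]; exact norm_add₃_le
        _ ≤ 10*h^2 + (1 + C*h) * ‖Xn - Y ((m:ℝ)*h)‖ + 2*C*h^2 :=
            add_le_add (add_le_add hterm1 hterm2) hterm3
        _ ≤ 10*h^2 + (1 + C*h) * (D*h/C * ((1+C*h)^m - 1)) + 2*C*h^2 := by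
            have hpos : (0:ℝ) ≤ 1 + C*h := by positivity
            have := mul_le_mul_of_nonneg_left ihm hpos
            linarith
        _ = D*h/C * ((1+C*h)^(m+1) - 1) := halg
  have hp : (1 + C*h)^n ≤ Real.exp C := by
    calc (1 + C*h)^n ≤ (1 + C*h)^L := by
          refine pow_le_pow_right₀ ?_ hn
          nlinarith
      _ ≤ (Real.exp (C*h))^L := by
          refine pow_le_pow_left₀ (by positivity) ?_ L
          linarith [Real.add_one_le_exp (C*h)]
      _ = Real.exp ((L:ℝ) * (C*h)) := (Real.exp_nat_mul _ L).symm
      _ = Real.exp C := by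
          congr 1
          nlinarith [hhL]
  have hkey := key n hn
  have hfin : ‖scheme d N β Q K X₀ L n - Y ((n:ℝ)*h)‖ ≤ B * h := by
    refine hkey.trans ?_
    have h1 : (1+C*h)^n - 1 ≤ Real.exp C - 1 := by linarith
    have h2 : (0:ℝ) ≤ D*h/C := by positivity
    calc D*h/C * ((1+C*h)^n - 1) ≤ D*h/C * (Real.exp C - 1) := by
          refine mul_le_mul_of_nonneg_left h1 h2
      _ = B * h := by rw [hBdef]; ring
  have hdiv : (n:ℝ)/(L:ℝ) = (n:ℝ)*h := by rw [hhdef]; ring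
  rw [hdiv]
  calc ‖scheme d N β Q K X₀ L n i - Y ((n:ℝ)*h) i‖
      ≤ ‖scheme d N β Q K X₀ L n - Y ((n:ℝ)*h)‖ :=
        norm_le_pi_norm (scheme d N β Q K X₀ L n - Y ((n:ℝ)*h)) i
    _ ≤ B * h := hfin
    _ ≤ ε := by
        have hceil : B/ε ≤ (⌈B/ε⌉₊ : ℝ) := Nat.le_ceil _
        have hLge : ((⌈B/ε⌉₊ : ℕ) + 1 : ℕ) ≤ L := le_trans (le_max_right _ _) hLL
        have hLgeR : ((⌈B/ε⌉₊:ℝ) + 1) ≤ (L:ℝ) := by exact_mod_cast hLge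
        have hBL : B ≤ ε * L := by
          have : B/ε ≤ (L:ℝ) := by linarith
          calc B = (B/ε) * ε := by field_simp
            _ ≤ (L:ℝ) * ε := mul_le_mul_of_nonneg_right this hε.le
            _ = ε * L := by ring
        rw [hhdef]
        rw [mul_one_div, div_le_iff₀ hLpos]
        linarith
end

section
/- Let β > 0 and let z : [0, ∞) → ℝ be differentiable with z'(t) = e^{β z(t)} (1 − z(t)²) for all t ≥ 0 and z(0) ∈ (−1, 1). Then z(t) ∈ (−1, 1) for all t ≥ 0, z is nondecreasing, and z(t) → 1 as t → ∞. -/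
open Real

/-- Monotonicity on `[0,∞)` from a nonnegative right derivative. -/
lemma mono_aux_overlap (f f' : ℝ → ℝ)
    (hf : ∀ t : ℝ, 0 ≤ t → HasDerivWithinAt f (f' t) (Set.Ici (0 : ℝ)) t)
    (hf' : ∀ t : ℝ, 0 ≤ t → 0 ≤ f' t) : MonotoneOn f (Set.Ici (0 : ℝ)) := by
  have hcont : ContinuousOn f (Set.Ici (0 : ℝ)) := fun t ht =>
    (hf t ht).continuousWithinAt
  apply monotoneOn_of_deriv_nonneg (convex_Ici 0) hcont
  · intro x hx
    rw [interior_Ici] at hx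
    exact (((hf x (le_of_lt hx)).hasDerivAt
      (Ici_mem_nhds hx)).differentiableAt).differentiableWithinAt
  · intro x hx
    rw [interior_Ici] at hx
    rw [((hf x (le_of_lt hx)).hasDerivAt (Ici_mem_nhds hx)).deriv]
    exact hf' x (le_of_lt hx)

/-- A Grönwall-type positivity lemma: a solution of a linear ODE `w' = c·w` with
continuous coefficient `c` and positive initial value stays positive. -/
lemma pos_of_linear_ode_overlap (w c : ℝ → ℝ) (hc : Continuous c)
    (hw : ∀ t : ℝ, 0 ≤ t → HasDerivWithinAt w (c t * w t) (Set.Ici (0 : ℝ)) t)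
    (hw0 : 0 < w 0) : ∀ T : ℝ, 0 ≤ T → 0 < w T := by
  intro T hT
  have hwc : ContinuousOn w (Set.Ici (0 : ℝ)) := fun t ht =>
    (hw t ht).continuousWithinAt
  set B : ℝ → ℝ := fun t => ∫ s in (0:ℝ)..t, c s with hB
  have hBd : ∀ t : ℝ, HasDerivAt B (c t) t := fun t =>
    (hc.integral_hasStrictDerivAt 0 t).hasDerivAt
  have hBc : Continuous B := continuous_iff_continuousAt.2 fun t => (hBd t).continuousAt
  set p : ℝ → ℝ := fun t => w t * exp (-B t) with hp
  have hpc : ContinuousOn p (Set.Icc (0 : ℝ) T) :=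
    (hwc.mono Set.Icc_subset_Ici_self).mul ((hBc.neg).rexp.continuousOn)
  have hpd : ∀ x ∈ Set.Ico (0 : ℝ) T, HasDerivWithinAt p 0 (Set.Ici x) x := by
    intro x hx
    have hx0 : (0:ℝ) ≤ x := hx.1
    have hss : Set.Ici x ⊆ Set.Ici (0 : ℝ) := Set.Ici_subset_Ici.2 hx0
    have hw' : HasDerivWithinAt w (c x * w x) (Set.Ici x) x := (hw x hx0).mono hss
    have hB' : HasDerivWithinAt (fun t => exp (-B t)) (exp (-B x) * (-(c x)))
        (Set.Ici x) x := ((hBd x).hasDerivWithinAt.neg).exp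
    have := hw'.mul hB'
    refine this.congr_deriv ?_
    ring
  have hconst := constant_of_has_deriv_right_zero hpc hpd T
    (Set.mem_Icc.2 ⟨hT, le_refl T⟩)
  have hp0 : 0 < p 0 := mul_pos hw0 (exp_pos _)
  have hpT : 0 < w T * exp (-B T) := by
    have : 0 < p T := hconst ▸ hp0
    exact this
  nlinarith [hpT, exp_pos (-B T)]

/-- Deterministic two-token overlap dynamics for unnormalized attention:
if `z' = e^{βz}(1 − z²)` with `z(0) ∈ (−1, 1)`, then `z` stays in `(−1, 1)`,
is nondecreasing on `[0, ∞)`, and converges to `1` at infinity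
(the two tokens always cluster to a single point in the deterministic regime). -/
theorem deterministic_overlap_clusters (β : ℝ) (hβ : 0 < β)
    (z : ℝ → ℝ)
    (hz : ∀ t : ℝ, 0 ≤ t →
      HasDerivWithinAt z (exp (β * z t) * (1 - z t ^ 2)) (Set.Ici (0 : ℝ)) t)
    (h0 : z 0 ∈ Set.Ioo (-1 : ℝ) 1) :
    (∀ t : ℝ, 0 ≤ t → z t ∈ Set.Ioo (-1 : ℝ) 1) ∧
    MonotoneOn z (Set.Ici (0 : ℝ)) ∧
    Filter.Tendsto z Filter.atTop (nhds 1) := by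
  have hzc : ContinuousOn z (Set.Ici (0 : ℝ)) := fun t ht =>
    (hz t ht).continuousWithinAt
  -- continuous extension of z to all of ℝ
  set ZZ : ℝ → ℝ := fun t => z (max t 0) with hZZ
  have hZZc : Continuous ZZ :=
    hzc.comp_continuous (continuous_id.max continuous_const) fun x => le_max_right x 0
  have hZZeq : ∀ t : ℝ, 0 ≤ t → ZZ t = z t := by
    intro t ht; simp [hZZ, max_eq_left ht]
  -- Part 1: invariance of (-1, 1)
  have hup : ∀ T : ℝ, 0 ≤ T → z T < 1 := by
    intro T hT
    have := pos_of_linear_ode_overlap (fun t => 1 - z t)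
      (fun t => -(exp (β * ZZ t) * (1 + ZZ t)))
      (((continuous_const.mul hZZc).rexp.mul (continuous_const.add hZZc)).neg)
      (by
        intro t ht
        have := (hasDerivWithinAt_const t _ (1:ℝ)).sub (hz t ht)
        refine this.congr_deriv ?_
        rw [hZZeq t ht]
        ring)
      (by linarith [h0.2]) T hT
    linarith
  have hlow : ∀ T : ℝ, 0 ≤ T → -1 < z T := by
    intro T hT
    have := pos_of_linear_ode_overlap (fun t => 1 + z t)
      (fun t => exp (β * ZZ t) * (1 - ZZ t))
      ((continuous_const.mul hZZc).rexp.mul (continuous_const.sub hZZc))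
      (by
        intro t ht
        have := (hasDerivWithinAt_const t _ (1:ℝ)).add (hz t ht)
        refine this.congr_deriv ?_
        rw [hZZeq t ht]
        ring)
      (by linarith [h0.1]) T hT
    linarith
  have hinv : ∀ t : ℝ, 0 ≤ t → z t ∈ Set.Ioo (-1 : ℝ) 1 :=
    fun t ht => ⟨hlow t ht, hup t ht⟩
  -- Part 2: monotonicity
  have hderiv_nonneg : ∀ t : ℝ, 0 ≤ t → 0 ≤ exp (β * z t) * (1 - z t ^ 2) := by
    intro t ht
    have h1 := hlow t ht
    have h2 := hup t ht
    have he := exp_pos (β * z t)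
    have h3 : 0 < 1 - z t ^ 2 := by nlinarith
    exact (mul_pos he h3).le
  have hmono : MonotoneOn z (Set.Ici (0 : ℝ)) :=
    mono_aux_overlap z _ hz hderiv_nonneg
  refine ⟨hinv, hmono, ?_⟩
  -- Part 3: convergence to 1
  have hZZmono : Monotone ZZ := by
    intro s t hst
    exact hmono (le_max_right s 0) (le_max_right t 0) (max_le_max hst le_rfl)
  have hbdd : BddAbove (Set.range ZZ) := by
    refine ⟨1, ?_⟩
    rintro _ ⟨t, rfl⟩
    exact (hup (max t 0) (le_max_right t 0)).le
  set L : ℝ := ⨆ t, ZZ t with hL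
  have htendsto : Filter.Tendsto ZZ Filter.atTop (nhds L) :=
    tendsto_atTop_ciSup hZZmono hbdd
  have hzZZ : ∀ᶠ t in Filter.atTop, ZZ t = z t := by
    filter_upwards [Filter.eventually_ge_atTop (0:ℝ)] with t ht
    exact hZZeq t ht
  have hle : ∀ t : ℝ, 0 ≤ t → z t ≤ L := by
    intro t ht
    have := le_ciSup hbdd t
    rwa [hZZeq t ht] at this
  have hL1 : L ≤ 1 := by
    apply ciSup_le
    intro t
    exact (hup (max t 0) (le_max_right t 0)).le
  have hz0L : z 0 ≤ L := hle 0 le_rfl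
  -- show L = 1 by contradiction
  have hLeq : L = 1 := by
    by_contra hne
    have hLlt : L < 1 := lt_of_le_of_ne hL1 hne
    set c : ℝ := exp (β * z 0) * ((1 - L) * (1 + z 0)) with hc
    have hcpos : 0 < c := by
      apply mul_pos (exp_pos _)
      apply mul_pos
      · linarith
      · linarith [h0.1]
    -- the derivative is bounded below by c on [0, ∞)
    have hlb : ∀ t : ℝ, 0 ≤ t → c ≤ exp (β * z t) * (1 - z t ^ 2) := by
      intro t ht
      have h1 : z 0 ≤ z t := hmono (Set.mem_Ici.2 le_rfl) (Set.mem_Ici.2 ht) ht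
      have h2 : z t ≤ L := hle t ht
      have h3 : -1 < z 0 := h0.1
      have hexp : exp (β * z 0) ≤ exp (β * z t) :=
        exp_le_exp.2 (mul_le_mul_of_nonneg_left h1 hβ.le)
      have hfac : (1 - L) * (1 + z 0) ≤ 1 - z t ^ 2 := by nlinarith
      have hfacpos : 0 < (1 - L) * (1 + z 0) := by
        apply mul_pos <;> linarith
      calc c = exp (β * z 0) * ((1 - L) * (1 + z 0)) := rfl
        _ ≤ exp (β * z t) * ((1 - L) * (1 + z 0)) :=
            mul_le_mul_of_nonneg_right hexp hfacpos.le
        _ ≤ exp (β * z t) * (1 - z t ^ 2) :=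
            mul_le_mul_of_nonneg_left hfac (exp_pos _).le
    -- hence z grows at least linearly, contradicting z ≤ L
    have hgmono : MonotoneOn (fun t => z t - c * t) (Set.Ici (0 : ℝ)) := by
      apply mono_aux_overlap _ (fun t => exp (β * z t) * (1 - z t ^ 2) - c)
      · intro t ht
        have hid : HasDerivWithinAt (fun s : ℝ => c * s) c (Set.Ici 0) t := by
          simpa using ((hasDerivAt_id t).const_mul c).hasDerivWithinAt
        exact (hz t ht).sub hid
      · intro t ht
        linarith [hlb t ht]
    have ht₀pos : (0:ℝ) ≤ (L - z 0 + 1) / c := div_nonneg (by linarith) hcpos.le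
    have hg := hgmono (Set.mem_Ici.2 le_rfl) (Set.mem_Ici.2 ht₀pos) ht₀pos
    simp only [mul_zero, sub_zero] at hg
    have hct₀ : c * ((L - z 0 + 1) / c) = L - z 0 + 1 := by
      field_simp
    have hzle := hle _ ht₀pos
    nlinarith [hg, hct₀, hzle]
  rw [← hLeq]
  exact htendsto.congr' hzZZ
end
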